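/- arXiv:1310.1981 — 6 statements merged into one kernel-verified Lean document; each statement's English description precedes it below -/
import Mathlib

section
/- For u, v in the open unit ball of ℝⁿ, the Einstein sum u ⊕ v lies in the open unit ball, i.e., ‖u ⊕ v‖ < 1. -/
open scoped RealInnerProductSpace

noncomputable def gam {n : ℕ} (v : EuclideanSpace ℝ (Fin n)) : ℝ :=
  1 / Real.sqrt (1 - ‖v‖ ^ 2)

noncomputable def eAdd {n : ℕ} (u v : EuclideanSpace ℝ (Fin n)) :
    EuclideanSpace ℝ (Fin n) :=
  (1 / (1 + ⟪u, v⟫)) •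
    (u + (1 / gam u) • v + ((gam u / (1 + gam u)) * ⟪u, v⟫) • u)

lemma key_ineq (a b c s : ℝ) (hb : 0 ≤ b) (ha1 : a < 1) (hb1 : b < 1)
    (hc : -1 < c) (hs : 0 < s) (hs2 : s ^ 2 = 1 - a) :
    ((1 + s + c) / ((1 + s) * (1 + c))) ^ 2 * a
      + 2 * ((1 + s + c) / ((1 + s) * (1 + c))) * (s / (1 + c)) * c
      + (s / (1 + c)) ^ 2 * b < 1 := by
  have h1 : (0:ℝ) < 1 + s := by linarith
  have h2 : (0:ℝ) < 1 + c := by linarith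
  have key : 1 - (((1 + s + c) / ((1 + s) * (1 + c))) ^ 2 * a
      + 2 * ((1 + s + c) / ((1 + s) * (1 + c))) * (s / (1 + c)) * c
      + (s / (1 + c)) ^ 2 * b) = (1 - a) * (1 - b) / (1 + c) ^ 2 := by
    have ha : a = 1 - s ^ 2 := by linarith
    subst ha
    field_simp
    ring
  have hpos : (0:ℝ) < (1 - a) * (1 - b) / (1 + c) ^ 2 := by
    apply div_pos (by nlinarith) (by positivity)
  linarith

theorem eAdd_mem_ball {n : ℕ} (u v : EuclideanSpace ℝ (Fin n))
    (hu : ‖u‖ < 1) (hv : ‖v‖ < 1) :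
    ‖eAdd u v‖ < 1 := by
  set c : ℝ := ⟪u, v⟫ with hcdef
  set s : ℝ := Real.sqrt (1 - ‖u‖ ^ 2) with hsdef
  have hu2 : ‖u‖ ^ 2 < 1 := by nlinarith [norm_nonneg u]
  have hs : 0 < s := Real.sqrt_pos.mpr (by linarith)
  have hs2 : s ^ 2 = 1 - ‖u‖ ^ 2 := Real.sq_sqrt (by linarith)
  have hcabs : |c| ≤ ‖u‖ * ‖v‖ := abs_real_inner_le_norm u v
  have hcl : -1 < c := by
    have : ‖u‖ * ‖v‖ < 1 := by nlinarith [norm_nonneg u, norm_nonneg v]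
    cases' abs_le.mp hcabs with h1 h2
    linarith
  have h1c : (0:ℝ) < 1 + c := by linarith
  have hgam : gam u = 1 / s := by rw [gam]
  have hginv : 1 / gam u = s := by rw [hgam]; field_simp
  have hgfrac : gam u / (1 + gam u) = 1 / (1 + s) := by
    rw [hgam]; field_simp; ring
  set A : ℝ := (1 + s + c) / ((1 + s) * (1 + c)) with hAdef
  set B : ℝ := s / (1 + c) with hBdef
  have heq : eAdd u v = A • u + B • v := by
    rw [eAdd, hginv, hgfrac, ← hcdef, hAdef, hBdef]
    match_scalars <;> field_simp <;> try ring
  have hnorm2 : ‖eAdd u v‖ ^ 2 = A ^ 2 * ‖u‖ ^ 2 + 2 * A * B * c + B ^ 2 * ‖v‖ ^ 2 := by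
    rw [heq, @norm_add_sq_real, norm_smul, norm_smul, real_inner_smul_left,
      real_inner_smul_right, ← hcdef]
    simp only [Real.norm_eq_abs, mul_pow, sq_abs]
    ring
  have hlt : ‖eAdd u v‖ ^ 2 < 1 := by
    rw [hnorm2]
    exact key_ineq (‖u‖ ^ 2) (‖v‖ ^ 2) c s (by positivity) hu2
      (by nlinarith [norm_nonneg v]) hcl hs hs2
  nlinarith [norm_nonneg (eAdd u v)]
end

section
/- For every v in the open unit ball of ℝⁿ, the vector w = (γ_v/(1+γ_v)) v lies in the open unit ball and satisfies w ⊕ w = v under Einstein addition. -/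
open scoped RealInnerProductSpace

/-! Writing `s = √(1 - ‖v‖²) = 1 / γ_v`, the half-vector is `v / (1 + s)`. Einstein addition
of a vector `u` to itself only rescales it, `u ⊕ u = (2 / (1 + ‖u‖²)) u`, because
`1/γ_u + γ_u/(1 + γ_u) ‖u‖² = 1`; for `u = v / (1 + s)` the factor `2 / (1 + ‖u‖²)` is
exactly `1 + s`. -/

section

variable {n : ℕ}

theorem one_div_gam (v : EuclideanSpace ℝ (Fin n)) : 1 / gam v = √(1 - ‖v‖ ^ 2) :=
  one_div_one_div _

theorem sqrt_one_sub_norm_sq_pos {v : EuclideanSpace ℝ (Fin n)} (hv : ‖v‖ < 1) :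
    0 < √(1 - ‖v‖ ^ 2) :=
  Real.sqrt_pos.mpr (by nlinarith [norm_nonneg v])

theorem sq_sqrt_one_sub_norm_sq {v : EuclideanSpace ℝ (Fin n)} (hv : ‖v‖ ≤ 1) :
    √(1 - ‖v‖ ^ 2) ^ 2 = 1 - ‖v‖ ^ 2 :=
  Real.sq_sqrt (by nlinarith [norm_nonneg v])

theorem gam_div_one_add_gam {v : EuclideanSpace ℝ (Fin n)} (hv : ‖v‖ < 1) :
    gam v / (1 + gam v) = 1 / (1 + √(1 - ‖v‖ ^ 2)) := by
  have hs := sqrt_one_sub_norm_sq_pos hv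
  rw [gam]
  field_simp
  ring

theorem eAdd_self {u : EuclideanSpace ℝ (Fin n)} (hu : ‖u‖ < 1) :
    eAdd u u = (2 / (1 + ‖u‖ ^ 2)) • u := by
  set s := √(1 - ‖u‖ ^ 2) with hs_def
  have hs : 0 < s := sqrt_one_sub_norm_sq_pos hu
  have hs_sq : s ^ 2 = 1 - ‖u‖ ^ 2 := sq_sqrt_one_sub_norm_sq hu.le
  have hcoeff : 1 + s + 1 / (1 + s) * ‖u‖ ^ 2 = 2 := by
    field_simp
    linear_combination hs_sq
  rw [eAdd, real_inner_self_eq_norm_sq, one_div_gam, gam_div_one_add_gam hu, ← hs_def,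
    ← hcoeff]
  module

end

theorem half_eAdd_half {n : ℕ} (v : EuclideanSpace ℝ (Fin n)) (hv : ‖v‖ < 1) :
    ‖(gam v / (1 + gam v)) • v‖ < 1 ∧
      eAdd ((gam v / (1 + gam v)) • v) ((gam v / (1 + gam v)) • v) = v := by
  rw [gam_div_one_add_gam hv]
  set s := √(1 - ‖v‖ ^ 2) with hs_def
  have hs : 0 < s := sqrt_one_sub_norm_sq_pos hv
  have hs_sq : s ^ 2 = 1 - ‖v‖ ^ 2 := sq_sqrt_one_sub_norm_sq hv.le
  have hnorm : ‖(1 / (1 + s)) • v‖ = ‖v‖ / (1 + s) := by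
    rw [norm_smul, Real.norm_of_nonneg (by positivity)]
    ring
  have hhalf : ‖(1 / (1 + s)) • v‖ < 1 := by
    rw [hnorm, div_lt_one (by positivity)]
    linarith
  refine ⟨hhalf, ?_⟩
  have hscale : 2 / (1 + ‖(1 / (1 + s)) • v‖ ^ 2) * (1 / (1 + s)) = 1 := by
    rw [hnorm]
    field_simp
    linear_combination -hs_sq
  rw [eAdd_self hhalf, smul_smul, hscale, one_smul]
end

section
/- For v in the open unit ball of ℝⁿ, the Lorentz boost B(v), the (n+1)×(n+1) block matrix with blocks [[γ_v, γ_v vᵀ], [γ_v v, I_n + (γ_v²/(1+γ_v)) v vᵀ]], is symmetric positive definite. -/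
open scoped RealInnerProductSpace

noncomputable def boost {n : ℕ} (v : EuclideanSpace ℝ (Fin n)) :
    Matrix (Unit ⊕ Fin n) (Unit ⊕ Fin n) ℝ :=
  Matrix.fromBlocks
    (Matrix.of fun _ _ => gam v)
    (Matrix.of fun _ j => gam v * v j)
    (Matrix.of fun i _ => gam v * v i)
    (1 + Matrix.of fun i j => (gam v) ^ 2 / (1 + gam v) * v i * v j)

/-! The Schur complement of the entry `γ` in `B(v)` is `I - (γ / (1 + γ)) v vᵀ`, and
`(γ / (1 + γ)) ‖v‖² < 1`, so by Cauchy–Schwarz this complement is positive definite, hence so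
is `B(v)`. -/

open Matrix

namespace Matrix

theorem posDef_fromBlocks₁₁ {m n K : Type*} [Fintype m] [Fintype n] [DecidableEq m]
    [Field K] [PartialOrder K] [StarRing K] [StarOrderedRing K]
    {A : Matrix m m K} (B : Matrix m n K) (D : Matrix n n K) (hA : A.PosDef)
    (hS : (D - Bᴴ * A⁻¹ * B).PosDef) : (fromBlocks A B Bᴴ D).PosDef := by
  have := hA.isUnit.invertible
  refine .of_dotProduct_mulVec_pos ((IsHermitian.fromBlocks₁₁ B D hA.1).mpr hS.1) fun x hx => ?_
  rw [dotProduct_mulVec, ← Sum.elim_comp_inl_inr x, schur_complement_eq₁₁ B D _ _ hA.1,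
    ← dotProduct_mulVec, ← dotProduct_mulVec]
  by_cases hx₂ : x ∘ Sum.inr = 0
  · have hx₁ : x ∘ Sum.inl ≠ 0 := fun hx₁ => hx <| by
      rw [← Sum.elim_comp_inl_inr x, hx₁, hx₂]; ext (_ | _) <;> rfl
    simpa [hx₂] using hA.dotProduct_mulVec_pos hx₁
  · exact add_pos_of_nonneg_of_pos (hA.posSemidef.dotProduct_mulVec_nonneg _)
      (hS.dotProduct_mulVec_pos hx₂)

theorem posDef_one_sub_smul_vecMulVec {ι : Type*} [Fintype ι] [DecidableEq ι]
    (u : ι → ℝ) {c : ℝ} (hc : c * (u ⬝ᵥ u) < 1) : (1 - c • vecMulVec u u).PosDef := by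
  refine .of_dotProduct_mulVec_pos (by simp [IsHermitian]) fun x hx => ?_
  have hxx : 0 < x ⬝ᵥ x := by simpa using dotProduct_star_self_pos_iff.mpr hx
  have hcs : (u ⬝ᵥ x) ^ 2 ≤ (u ⬝ᵥ u) * (x ⬝ᵥ x) := by
    simpa only [dotProduct, sq] using Finset.sum_mul_sq_le_sq_mul_sq Finset.univ u x
  have hform : star x ⬝ᵥ (1 - c • vecMulVec u u) *ᵥ x = x ⬝ᵥ x - c * (u ⬝ᵥ x) ^ 2 := by
    simp [sub_mulVec, smul_mulVec, vecMulVec_mulVec, dotProduct_comm x u, sq]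
  rw [hform]
  rcases le_or_gt c 0 with hc0 | hc0
  · nlinarith [sq_nonneg (u ⬝ᵥ x)]
  · nlinarith [mul_le_mul_of_nonneg_left hcs hc0.le]

end Matrix

theorem EuclideanSpace.dotProduct_self_eq_norm_sq {ι : Type*} [Fintype ι]
    (x : EuclideanSpace ℝ ι) : ⇑x ⬝ᵥ ⇑x = ‖x‖ ^ 2 := by
  rw [← real_inner_self_eq_norm_sq, EuclideanSpace.inner_eq_star_dotProduct, star_trivial]

section Boost

variable {n : ℕ} (v : EuclideanSpace ℝ (Fin n))

theorem gam_pos (hv : ‖v‖ < 1) : 0 < gam v := by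
  have : 0 < 1 - ‖v‖ ^ 2 := by nlinarith [norm_nonneg v]
  unfold gam
  positivity

theorem boost_eq_fromBlocks : boost v =
    fromBlocks (diagonal fun _ => gam v) (replicateRow Unit (gam v • ⇑v))
      (replicateRow Unit (gam v • ⇑v))ᴴ (1 + (gam v ^ 2 / (1 + gam v)) • vecMulVec v v) := by
  ext (_ | i) (_ | j) <;> simp [boost, vecMulVec, mul_assoc]

theorem boost_schurComplement (hv : ‖v‖ < 1) :
    (1 + (gam v ^ 2 / (1 + gam v)) • vecMulVec v v) -
      (replicateRow Unit (gam v • ⇑v))ᴴ * (diagonal fun _ : Unit => gam v)⁻¹ *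
        replicateRow Unit (gam v • ⇑v)
      = 1 - (gam v / (1 + gam v)) • vecMulVec v v := by
  have hγ := gam_pos v hv
  ext i j
  simp [vecMulVec, mul_apply, one_apply]
  field_simp
  ring

end Boost

theorem boost_posDef {n : ℕ} (v : EuclideanSpace ℝ (Fin n)) (hv : ‖v‖ < 1) :
    (boost v).IsSymm ∧ (boost v).PosDef := by
  have hγ := gam_pos v hv
  have hc : gam v / (1 + gam v) * (⇑v ⬝ᵥ ⇑v) < 1 := by
    rw [EuclideanSpace.dotProduct_self_eq_norm_sq]
    exact mul_lt_one_of_nonneg_of_lt_one_left (by positivity)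
      ((div_lt_one (by positivity)).mpr (by linarith)) (by nlinarith [norm_nonneg v])
  have hpos : (boost v).PosDef := by
    rw [boost_eq_fromBlocks]
    refine posDef_fromBlocks₁₁ _ _ (posDef_diagonal_iff.mpr fun _ => hγ) ?_
    rw [boost_schurComplement v hv]
    exact posDef_one_sub_smul_vecMulVec _ hc
  exact ⟨isHermitian_iff_isSymm.mp hpos.isHermitian, hpos⟩
end

section
/- For v in the open unit ball of ℝⁿ, B(v)² = B(v ⊕ v), i.e., the square of the Lorentz boost of v is the Lorentz boost of the Einstein double of v. -/
/-!
For a fixed vector `v`, the matrices `[[a, b vᵀ], [c v, I + d v vᵀ]]` are closed under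
multiplication, and the coefficients of a product depend only on the coefficients of the factors
and on `‖v‖²`. The boost `B(v)` is such a matrix, and so is `B(v ⊕ v)` because `v ⊕ v` is a
multiple of `v`. Eliminating `‖v‖² = 1 - γ⁻²`, both `B(v)²` and `B(v ⊕ v)` turn out to have
coefficients `(2γ² - 1, 2γ², 2γ², 2γ²)`.
-/

open scoped RealInnerProductSpace

open Matrix

namespace Matrix

variable {m R : Type*} [DecidableEq m] [CommRing R]

def rankOneBlock (v : m → R) (a b c d : R) : Matrix (Unit ⊕ m) (Unit ⊕ m) R :=
  fromBlocks (of fun _ _ => a) (of fun _ j => b * v j) (of fun i _ => c * v i)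
    (1 + of fun i j => d * v i * v j)

theorem rankOneBlock_mul [Fintype m] (v : m → R) (a b c d a' b' c' d' : R) :
    rankOneBlock v a b c d * rankOneBlock v a' b' c' d' =
      rankOneBlock v (a * a' + b * c' * (v ⬝ᵥ v)) (a * b' + b + b * d' * (v ⬝ᵥ v))
        (c * a' + c' + d * c' * (v ⬝ᵥ v)) (c * b' + d + d' + d * d' * (v ⬝ᵥ v)) := by
  ext (_ | i) (_ | j) <;>
    simp [rankOneBlock, mul_apply, dotProduct, one_apply, mul_add, Finset.sum_add_distrib,
      Finset.mul_sum, mul_comm, mul_left_comm] <;> ring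

theorem rankOneBlock_smul (t : R) (v : m → R) (a b c d : R) :
    rankOneBlock (t • v) a b c d = rankOneBlock v a (b * t) (c * t) (d * t ^ 2) := by
  ext (_ | i) (_ | j) <;> simp [rankOneBlock] <;> ring

end Matrix

section Boost

variable {n : ℕ} {v : EuclideanSpace ℝ (Fin n)}

theorem boost_eq_rankOneBlock (v : EuclideanSpace ℝ (Fin n)) :
    boost v = rankOneBlock v (gam v) (gam v) (gam v) (gam v ^ 2 / (1 + gam v)) :=
  rfl

theorem EuclideanSpace.dotProduct_self_eq_norm_sq_s12 (v : EuclideanSpace ℝ (Fin n)) :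
    ⇑v ⬝ᵥ ⇑v = ‖v‖ ^ 2 := by
  rw [← real_inner_self_eq_norm_sq, EuclideanSpace.inner_eq_star_dotProduct, star_trivial]

theorem one_le_gam (hv : ‖v‖ < 1) : 1 ≤ gam v := by
  have hpos : 0 < 1 - ‖v‖ ^ 2 := by nlinarith [norm_nonneg v]
  rw [gam, one_le_div (Real.sqrt_pos.2 hpos)]
  exact Real.sqrt_le_one.2 (by nlinarith [sq_nonneg ‖v‖])

theorem two_mul_gam_sq_sub_one_pos (hv : ‖v‖ < 1) : 0 < 2 * gam v ^ 2 - 1 := by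
  nlinarith [one_le_gam hv]

theorem norm_sq_eq_one_sub_one_div_gam_sq (hv : ‖v‖ < 1) : ‖v‖ ^ 2 = 1 - 1 / gam v ^ 2 := by
  have hpos : 0 < 1 - ‖v‖ ^ 2 := by nlinarith [norm_nonneg v]
  rw [gam, div_pow, one_pow, Real.sq_sqrt hpos.le, one_div_one_div]
  ring

theorem eAdd_self_s12 (hv : ‖v‖ < 1) :
    eAdd v v = (2 * gam v ^ 2 / (2 * gam v ^ 2 - 1)) • v := by
  have hg := one_le_gam hv
  have hne := (two_mul_gam_sq_sub_one_pos hv).ne'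
  have hcoeff : 1 / (1 + (1 - 1 / gam v ^ 2)) *
      (1 + 1 / gam v + gam v / (1 + gam v) * (1 - 1 / gam v ^ 2)) =
      2 * gam v ^ 2 / (2 * gam v ^ 2 - 1) := by
    field_simp
    ring
  rw [eAdd, real_inner_self_eq_norm_sq, norm_sq_eq_one_sub_one_div_gam_sq hv, ← hcoeff]
  module

theorem gam_eAdd_self (hv : ‖v‖ < 1) : gam (eAdd v v) = 2 * gam v ^ 2 - 1 := by
  have hg := one_le_gam hv
  have hpos := two_mul_gam_sq_sub_one_pos hv
  have hnorm : 1 - ‖eAdd v v‖ ^ 2 = (1 / (2 * gam v ^ 2 - 1)) ^ 2 := by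
    rw [eAdd_self_s12 hv, norm_smul, mul_pow, Real.norm_eq_abs, sq_abs,
      norm_sq_eq_one_sub_one_div_gam_sq hv]
    field_simp
    ring
  rw [gam, hnorm, Real.sqrt_sq (one_div_nonneg.2 hpos.le), one_div_one_div]

theorem boost_eAdd_self (hv : ‖v‖ < 1) :
    boost (eAdd v v) =
      rankOneBlock v (2 * gam v ^ 2 - 1) (2 * gam v ^ 2) (2 * gam v ^ 2) (2 * gam v ^ 2) := by
  have hg := one_le_gam hv
  have hne := (two_mul_gam_sq_sub_one_pos hv).ne'
  rw [boost_eq_rankOneBlock, gam_eAdd_self hv, eAdd_self_s12 hv, WithLp.ofLp_smul, rankOneBlock_smul]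
  congr 1 <;> field_simp
  all_goals ring

theorem boost_sq_eq_rankOneBlock (hv : ‖v‖ < 1) :
    boost v ^ 2 =
      rankOneBlock v (2 * gam v ^ 2 - 1) (2 * gam v ^ 2) (2 * gam v ^ 2) (2 * gam v ^ 2) := by
  have hg := one_le_gam hv
  rw [boost_eq_rankOneBlock, sq, rankOneBlock_mul, EuclideanSpace.dotProduct_self_eq_norm_sq_s12,
    norm_sq_eq_one_sub_one_div_gam_sq hv]
  congr 1 <;> field_simp <;> ring

end Boost

theorem boost_sq {n : ℕ} (v : EuclideanSpace ℝ (Fin n)) (hv : ‖v‖ < 1) :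
    boost v ^ 2 = boost (eAdd v v) := by
  rw [boost_sq_eq_rankOneBlock hv, boost_eAdd_self hv]
end

section
/- For u, v in the open unit ball of ℝⁿ, the trace of the positive square root of B(u) B(v)² B(u) equals 2γ_{u⊕v} + n − 1. -/
/-!
Write `η = diag(-1, 1, …, 1)` and `ξ(x) = γ_x (1, x)` for the four-velocity of `x`.
The boost `B(x) = η + (1 + γ_x)⁻¹ a aᵀ`, with `a = ξ(x) + e₀`, is symmetric, preserves `η`
(`B η B = η`) and sends `e₀` to `ξ(x)`; as `1 = η + 2 e₀ e₀ᵀ`, this gives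
`B(x)² = η + 2 ξ(x) ξ(x)ᵀ`. Einstein addition is the composition law of four-velocities,
`B(u) ξ(v) = ξ(u ⊕ v)`, hence `B(u) B(v)² B(u) = η + 2 ξ(u ⊕ v) ξ(u ⊕ v)ᵀ = B(u ⊕ v)²`.
A boost is the square of the (symmetric) boost of half its rapidity, so it is positive
semidefinite, and uniqueness of positive square roots gives `S = B(u ⊕ v)`, whose trace is
`-1 + n + (1 + γ)⁻¹ ‖a‖² = 2γ + n - 1`.
-/

open scoped RealInnerProductSpace

open Matrix

section LorentzAlgebra

variable {m : Type*} [Fintype m]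

lemma add_smul_vecMulVec_mul_mul_self {K : Type*} [Field K] [DecidableEq m] {J : Matrix m m K}
    (hJ : J * J = 1) {a : m → K} {k : K} (hk : k ≠ 0) (ha : a ⬝ᵥ J *ᵥ a = -2 * k) :
    (J + k⁻¹ • vecMulVec a a) * J * (J + k⁻¹ • vecMulVec a a) = J := by
  set A := vecMulVec a a
  have hAJA : A * J * A = (-2 * k) • A := by
    rw [vecMulVec_mul, vecMulVec_mul_vecMulVec, ← ha, dotProduct_mulVec, ← vecMulVec_smul]
  have hc : k⁻¹ + k⁻¹ + k⁻¹ * k⁻¹ * (-2 * k) = 0 := by field_simp; ring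
  calc (J + k⁻¹ • A) * J * (J + k⁻¹ • A)
      = J * J * J + k⁻¹ • (J * J * A) + k⁻¹ • (A * J * J) + (k⁻¹ * k⁻¹) • (A * J * A) := by
        simp only [add_mul, mul_add, Matrix.smul_mul, Matrix.mul_smul, smul_smul]; abel
    _ = J + (k⁻¹ + k⁻¹ + k⁻¹ * k⁻¹ * (-2 * k)) • A := by
        rw [hJ, Matrix.one_mul, Matrix.one_mul, Matrix.mul_assoc, hJ, Matrix.mul_one, hAJA]
        module
    _ = J := by rw [hc, zero_smul, add_zero]

variable {R : Type*} [CommSemiring R] {L J : Matrix m m R}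

lemma mul_add_smul_vecMulVec_mul (hLt : Lᵀ = L) (hLJ : L * J * L = J) (c : R) (a : m → R) :
    L * (J + c • vecMulVec a a) * L = J + c • vecMulVec (L *ᵥ a) (L *ᵥ a) := by
  rw [mul_add, add_mul, hLJ, Matrix.mul_smul, Matrix.smul_mul, mul_vecMulVec, vecMulVec_mul,
    ← vecMul_transpose, hLt]

lemma mulVec_dotProduct_mulVec_mulVec (hLt : Lᵀ = L) (hLJ : L * J * L = J) (a : m → R) :
    L *ᵥ a ⬝ᵥ J *ᵥ (L *ᵥ a) = a ⬝ᵥ J *ᵥ a := by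
  rw [mulVec_mulVec, dotProduct_mulVec, ← vecMul_transpose, hLt, vecMul_vecMul,
    ← Matrix.mul_assoc, hLJ, ← dotProduct_mulVec]

end LorentzAlgebra

lemma norm_smul_sq {E : Type*} [NormedAddCommGroup E] [NormedSpace ℝ E] (c : ℝ) (y : E) :
    ‖c • y‖ ^ 2 = c ^ 2 * ‖y‖ ^ 2 := by
  rw [norm_smul, mul_pow, Real.norm_eq_abs, sq_abs]

section Boosts

variable {n : ℕ}

section Gamma

lemma gam_nonneg (x : EuclideanSpace ℝ (Fin n)) : 0 ≤ gam x := by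
  unfold gam; positivity

lemma one_add_gam_pos (x : EuclideanSpace ℝ (Fin n)) : 0 < 1 + gam x := by
  linarith [gam_nonneg x]

variable {x : EuclideanSpace ℝ (Fin n)}

lemma one_sub_norm_sq_pos (hx : ‖x‖ < 1) : 0 < 1 - ‖x‖ ^ 2 := by
  nlinarith [norm_nonneg x]

lemma gam_pos_s14 (hx : ‖x‖ < 1) : 0 < gam x :=
  one_div_pos.2 (Real.sqrt_pos.2 (one_sub_norm_sq_pos hx))

lemma gam_sq_mul_one_sub_norm_sq (hx : ‖x‖ < 1) : gam x ^ 2 * (1 - ‖x‖ ^ 2) = 1 := by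
  rw [gam, div_pow, Real.sq_sqrt (one_sub_norm_sq_pos hx).le]
  field_simp [(one_sub_norm_sq_pos hx).ne']

lemma norm_lt_one_of_sq_mul {c : ℝ} (h : c ^ 2 * (1 - ‖x‖ ^ 2) = 1) : ‖x‖ < 1 := by
  have : 0 < 1 - ‖x‖ ^ 2 := pos_of_mul_pos_right (by rw [h]; exact one_pos) (sq_nonneg c)
  nlinarith [norm_nonneg x]

lemma gam_eq_of_sq_mul {c : ℝ} (hc : 0 < c) (h : c ^ 2 * (1 - ‖x‖ ^ 2) = 1) : gam x = c := by
  have hx : 1 - ‖x‖ ^ 2 = c⁻¹ ^ 2 := by field_simp; linarith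
  rw [gam, hx, Real.sqrt_sq (by positivity), one_div, inv_inv]

end Gamma

def spacetimeVec (s : ℝ) (y : EuclideanSpace ℝ (Fin n)) : Unit ⊕ Fin n → ℝ :=
  Sum.elim (fun _ => s) (fun i => y i)

@[simp] lemma spacetimeVec_inl (s : ℝ) (y : EuclideanSpace ℝ (Fin n)) (t : Unit) :
    spacetimeVec s y (Sum.inl t) = s := rfl

@[simp] lemma spacetimeVec_inr (s : ℝ) (y : EuclideanSpace ℝ (Fin n)) (i : Fin n) :
    spacetimeVec s y (Sum.inr i) = y i := rfl

lemma spacetimeVec_dotProduct (s s' : ℝ) (y y' : EuclideanSpace ℝ (Fin n)) :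
    spacetimeVec s y ⬝ᵥ spacetimeVec s' y' = s * s' + ⟪y, y'⟫ := by
  simp [dotProduct, Fintype.sum_sum_type, PiLp.inner_apply, mul_comm]

lemma smul_spacetimeVec (c s : ℝ) (y : EuclideanSpace ℝ (Fin n)) :
    c • spacetimeVec s y = spacetimeVec (c * s) (c • y) := by
  ext (_ | i) <;> simp

def minkowski (n : ℕ) : Matrix (Unit ⊕ Fin n) (Unit ⊕ Fin n) ℝ :=
  fromBlocks (-1) 0 0 1

lemma minkowski_mul_self : minkowski n * minkowski n = 1 := by
  simp [minkowski, fromBlocks_multiply, fromBlocks_one]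

lemma minkowski_transpose : (minkowski n)ᵀ = minkowski n := by
  simp [minkowski, fromBlocks_transpose]

lemma trace_minkowski : (minkowski n).trace = n - 1 := by
  simp [minkowski, trace, Fintype.sum_sum_type]
  ring

lemma minkowski_mulVec_spacetimeVec (s : ℝ) (y : EuclideanSpace ℝ (Fin n)) :
    minkowski n *ᵥ spacetimeVec s y = spacetimeVec (-s) y := by
  ext (_ | i) <;> simp [minkowski, mulVec, dotProduct, Fintype.sum_sum_type, one_apply]

lemma spacetimeVec_dotProduct_minkowski_mulVec (s : ℝ) (y : EuclideanSpace ℝ (Fin n)) :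
    spacetimeVec s y ⬝ᵥ minkowski n *ᵥ spacetimeVec s y = -s ^ 2 + ‖y‖ ^ 2 := by
  rw [minkowski_mulVec_spacetimeVec, spacetimeVec_dotProduct, real_inner_self_eq_norm_sq]
  ring

lemma one_eq_minkowski_add :
    (1 : Matrix (Unit ⊕ Fin n) (Unit ⊕ Fin n) ℝ) =
      minkowski n + (2 : ℝ) • vecMulVec (spacetimeVec 1 0) (spacetimeVec 1 0) := by
  ext (_ | i) (_ | j) <;> simp [minkowski, one_apply, vecMulVec_apply]; norm_num

noncomputable def fourVelocity (x : EuclideanSpace ℝ (Fin n)) : Unit ⊕ Fin n → ℝ :=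
  spacetimeVec (gam x) (gam x • x)

section Boost

variable {x : EuclideanSpace ℝ (Fin n)}

lemma fourVelocity_dotProduct_minkowski_mulVec (hx : ‖x‖ < 1) :
    fourVelocity x ⬝ᵥ minkowski n *ᵥ fourVelocity x = -1 := by
  rw [fourVelocity, spacetimeVec_dotProduct_minkowski_mulVec, norm_smul_sq]
  linear_combination -gam_sq_mul_one_sub_norm_sq hx

lemma boost_eq_minkowski_add (x : EuclideanSpace ℝ (Fin n)) :
    boost x = minkowski n + (1 + gam x)⁻¹ •
      vecMulVec (spacetimeVec (1 + gam x) (gam x • x)) (spacetimeVec (1 + gam x) (gam x • x)) := by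
  have := (one_add_gam_pos x).ne'
  ext (_ | i) (_ | j) <;> simp [boost, minkowski, one_apply, vecMulVec_apply] <;> field_simp
  ring

lemma boost_transpose (x : EuclideanSpace ℝ (Fin n)) : (boost x)ᵀ = boost x := by
  rw [boost_eq_minkowski_add, transpose_add, transpose_smul, transpose_vecMulVec, minkowski_transpose]

lemma boost_mul_minkowski_mul_boost (hx : ‖x‖ < 1) :
    boost x * minkowski n * boost x = minkowski n := by
  rw [boost_eq_minkowski_add]
  refine add_smul_vecMulVec_mul_mul_self minkowski_mul_self (one_add_gam_pos x).ne' ?_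
  rw [spacetimeVec_dotProduct_minkowski_mulVec, norm_smul_sq]
  linear_combination -gam_sq_mul_one_sub_norm_sq hx

lemma boost_mulVec_spacetimeVec_one_zero (x : EuclideanSpace ℝ (Fin n)) :
    boost x *ᵥ spacetimeVec 1 0 = fourVelocity x := by
  have := (one_add_gam_pos x).ne'
  rw [boost_eq_minkowski_add, add_mulVec, smul_mulVec, vecMulVec_mulVec,
    minkowski_mulVec_spacetimeVec, spacetimeVec_dotProduct, op_smul_eq_smul, smul_smul,
    smul_spacetimeVec]
  ext (_ | i) <;> simp [fourVelocity]
  field_simp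

lemma boost_sq_s14 (hx : ‖x‖ < 1) :
    boost x ^ 2 = minkowski n + (2 : ℝ) • vecMulVec (fourVelocity x) (fourVelocity x) :=
  calc boost x ^ 2 = boost x * 1 * boost x := by rw [sq, Matrix.mul_one]
    _ = _ := by
      rw [one_eq_minkowski_add,
        mul_add_smul_vecMulVec_mul (boost_transpose x) (boost_mul_minkowski_mul_boost hx),
        boost_mulVec_spacetimeVec_one_zero]

/-- Every boost is the square of the boost with half its rapidity. -/
lemma boost_eq_sq_boost_smul (hx : ‖x‖ < 1) :
    boost x = boost ((gam x / (1 + gam x)) • x) ^ 2 := by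
  set h := (gam x / (1 + gam x)) • x
  have hk := one_add_gam_pos x
  have hh : (1 + gam x) / 2 * (1 - ‖h‖ ^ 2) = 1 := by
    rw [norm_smul_sq]
    field_simp
    linear_combination gam_sq_mul_one_sub_norm_sq hx
  have hh_lt : ‖h‖ < 1 := norm_lt_one_of_sq_mul (c := √((1 + gam x) / 2)) (by
    rw [Real.sq_sqrt (by positivity)]; exact hh)
  have hgam_h : gam h ^ 2 = (1 + gam x) / 2 :=
    mul_right_cancel₀ (one_sub_norm_sq_pos hh_lt).ne'
      ((gam_sq_mul_one_sub_norm_sq hh_lt).trans hh.symm)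
  have hξ : fourVelocity h = (gam h / (1 + gam x)) • spacetimeVec (1 + gam x) (gam x • x) := by
    rw [fourVelocity, smul_spacetimeVec, smul_smul]
    congr 1
    · field_simp
    · simp only [h, smul_smul]
      congr 1
      ring
  rw [boost_sq_s14 hh_lt, hξ, smul_vecMulVec, vecMulVec_smul, smul_smul, smul_smul,
    boost_eq_minkowski_add]
  congr 2
  field_simp
  linear_combination -2 * hgam_h

lemma boost_posSemidef (hx : ‖x‖ < 1) : (boost x).PosSemidef := by
  rw [boost_eq_sq_boost_smul hx, sq]
  simpa [conjTranspose_eq_transpose_of_trivial, boost_transpose] using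
    posSemidef_conjTranspose_mul_self (boost ((gam x / (1 + gam x)) • x))

lemma trace_boost (hx : ‖x‖ < 1) : (boost x).trace = 2 * gam x + n - 1 := by
  have := (one_add_gam_pos x).ne'
  rw [boost_eq_minkowski_add, trace_add, trace_smul, trace_vecMulVec, trace_minkowski,
    spacetimeVec_dotProduct, real_inner_self_eq_norm_sq, norm_smul_sq, smul_eq_mul]
  field_simp
  linear_combination -gam_sq_mul_one_sub_norm_sq hx

end Boost

section EinsteinAddition

variable {u v : EuclideanSpace ℝ (Fin n)}

lemma one_add_inner_pos (hu : ‖u‖ < 1) (hv : ‖v‖ < 1) : 0 < 1 + ⟪u, v⟫ := by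
  have := mul_lt_one_of_nonneg_of_lt_one_left (norm_nonneg u) hu hv.le
  linarith [neg_abs_le ⟪u, v⟫, abs_real_inner_le_norm u v]

lemma boost_mulVec_fourVelocity_eq_smul (hu : ‖u‖ < 1) (hv : ‖v‖ < 1) :
    boost u *ᵥ fourVelocity v = (gam u * gam v * (1 + ⟪u, v⟫)) • spacetimeVec 1 (eAdd u v) := by
  have := (one_add_gam_pos u).ne'
  have := (gam_pos_s14 hu).ne'
  have := (one_add_inner_pos hu hv).ne'
  rw [boost_eq_minkowski_add, add_mulVec, smul_mulVec, vecMulVec_mulVec, fourVelocity,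
    minkowski_mulVec_spacetimeVec, spacetimeVec_dotProduct, op_smul_eq_smul, smul_smul,
    smul_spacetimeVec, smul_spacetimeVec]
  ext (_ | i) <;> simp [eAdd, real_inner_smul_left, real_inner_smul_right] <;> field_simp <;> ring

-- `B(u)` preserves the Minkowski form, which is `-1` on the four-velocity of `v`.
lemma sq_mul_one_sub_norm_sq_eAdd (hu : ‖u‖ < 1) (hv : ‖v‖ < 1) :
    (gam u * gam v * (1 + ⟪u, v⟫)) ^ 2 * (1 - ‖eAdd u v‖ ^ 2) = 1 := by
  have h := mulVec_dotProduct_mulVec_mulVec (boost_transpose u) (boost_mul_minkowski_mul_boost hu)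
    (fourVelocity v)
  rw [fourVelocity_dotProduct_minkowski_mulVec hv, boost_mulVec_fourVelocity_eq_smul hu hv,
    smul_spacetimeVec, spacetimeVec_dotProduct_minkowski_mulVec, norm_smul_sq] at h
  linear_combination -h

lemma norm_eAdd_lt_one (hu : ‖u‖ < 1) (hv : ‖v‖ < 1) : ‖eAdd u v‖ < 1 :=
  norm_lt_one_of_sq_mul (sq_mul_one_sub_norm_sq_eAdd hu hv)

lemma gam_eAdd (hu : ‖u‖ < 1) (hv : ‖v‖ < 1) :
    gam (eAdd u v) = gam u * gam v * (1 + ⟪u, v⟫) := by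
  have := gam_pos_s14 hu
  have := gam_pos_s14 hv
  have := one_add_inner_pos hu hv
  exact gam_eq_of_sq_mul (by positivity) (sq_mul_one_sub_norm_sq_eAdd hu hv)

lemma boost_mulVec_fourVelocity (hu : ‖u‖ < 1) (hv : ‖v‖ < 1) :
    boost u *ᵥ fourVelocity v = fourVelocity (eAdd u v) := by
  rw [boost_mulVec_fourVelocity_eq_smul hu hv, smul_spacetimeVec, mul_one, ← gam_eAdd hu hv]
  rfl

lemma boost_mul_boost_sq_mul_boost (hu : ‖u‖ < 1) (hv : ‖v‖ < 1) :
    boost u * boost v ^ 2 * boost u = boost (eAdd u v) ^ 2 := by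
  rw [boost_sq_s14 hv, mul_add_smul_vecMulVec_mul (boost_transpose u) (boost_mul_minkowski_mul_boost hu),
    boost_mulVec_fourVelocity hu hv, boost_sq_s14 (norm_eAdd_lt_one hu hv)]

end EinsteinAddition

end Boosts

theorem trace_sqrt_boost {n : ℕ} (u v : EuclideanSpace ℝ (Fin n))
    (hu : ‖u‖ < 1) (hv : ‖v‖ < 1)
    (S : Matrix (Unit ⊕ Fin n) (Unit ⊕ Fin n) ℝ) (hS : S.PosSemidef)
    (hSsq : S ^ 2 = boost u * boost v ^ 2 * boost u) :
    S.trace = 2 * gam (eAdd u v) + (n : ℝ) - 1 := by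
  have hw := norm_eAdd_lt_one hu hv
  open scoped MatrixOrder in
  have hSw : S = boost (eAdd u v) :=
    (CFC.sq_eq_sq_iff S _ hS.nonneg (boost_posSemidef hw).nonneg).1
      (by rw [hSsq, boost_mul_boost_sq_mul_boost hu hv])
  rw [hSw, trace_boost hw]
end

section
/- For n ≥ 3 and v in the open unit ball of ℝⁿ, det μ_{n,v} = ((1 − ‖v‖²)/((n+1) − (n−3)‖v‖²))^{n+1}. -/
/-!
Taking the Schur complement of the top-left entry `a = 1 - b`, where `b = 1 / (2 γ²) = (1 - ‖v‖²) / 2`,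
leaves the rank-one update `b • 1 + (1 - a⁻¹) v vᵀ`, whose determinant is given by the matrix
determinant lemma. Altogether the block matrix has determinant `bⁿ (a + (a - 1) ‖v‖² / b) = bⁿ⁺¹`,
and the scalar prefactor times `b` is exactly `(1 - ‖v‖²) / ((n + 1) - (n - 3) ‖v‖²)`.
-/

open scoped RealInnerProductSpace

noncomputable def mobius {n : ℕ} (v : EuclideanSpace ℝ (Fin n)) :
    Matrix (Unit ⊕ Fin n) (Unit ⊕ Fin n) ℝ :=
  (2 * (gam v) ^ 2 / (((n : ℝ) - 3) + 4 * (gam v) ^ 2)) •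
    Matrix.fromBlocks
      (Matrix.of fun _ _ => 1 - 1 / (2 * (gam v) ^ 2))
      (Matrix.of fun _ j => v j)
      (Matrix.of fun i _ => v i)
      ((1 / (2 * (gam v) ^ 2)) • 1 + Matrix.of fun i j => v i * v j)

open Matrix

section
variable {K ι : Type*} [Field K] [Fintype ι] [DecidableEq ι]

theorem det_smul_one_add_vecMulVec {b : K} (hb : b ≠ 0) (u w : ι → K) :
    (b • 1 + vecMulVec u w).det = b ^ Fintype.card ι * (1 + (w ⬝ᵥ u) / b) := by
  have h : b • 1 + vecMulVec u w = b • (1 + vecMulVec (b⁻¹ • u) w) := by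
    rw [smul_add, smul_vecMulVec, smul_inv_smul₀ hb]
  rw [h, det_smul, vecMulVec_eq Unit, det_one_add_replicateCol_mul_replicateRow, dotProduct_smul,
    smul_eq_mul, div_eq_inv_mul]

theorem det_fromBlocks_vecMulVec {a b : K} (ha : a ≠ 0) (hb : b ≠ 0) (w : ι → K) :
    (fromBlocks (of fun _ _ : Unit => a) (replicateRow Unit w) (replicateCol Unit w)
      (b • 1 + vecMulVec w w)).det = b ^ Fintype.card ι * (a + (a - 1) * (w ⬝ᵥ w) / b) := by
  let _ : Invertible (of fun _ _ : Unit => a) :=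
    ⟨of fun _ _ => a⁻¹, by ext ⟨⟩ ⟨⟩; simp [mul_apply, ha], by ext ⟨⟩ ⟨⟩; simp [mul_apply, ha]⟩
  have schur : b • 1 + vecMulVec w w - replicateCol Unit w * ⅟(of fun _ _ : Unit => a) *
      replicateRow Unit w = b • 1 + vecMulVec ((1 - a⁻¹) • w) w := by
    ext i j
    simp only [invOf_eq_nonsing_inv, inv_subsingleton, Ring.inverse_eq_inv', of_apply,
      Matrix.sub_apply, Matrix.add_apply, Matrix.smul_apply, smul_eq_mul, vecMulVec_apply,
      mul_apply, Fintype.sum_unique, replicateCol_apply, replicateRow_apply, diagonal_apply_eq,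
      Pi.smul_apply]
    ring
  rw [det_fromBlocks₁₁, schur, det_smul_one_add_vecMulVec hb, det_unique, dotProduct_smul]
  simp only [of_apply, smul_eq_mul]
  field_simp

end

theorem gam_sq {n : ℕ} {v : EuclideanSpace ℝ (Fin n)} (hv : ‖v‖ < 1) :
    gam v ^ 2 = (1 - ‖v‖ ^ 2)⁻¹ := by
  have : 0 ≤ 1 - ‖v‖ ^ 2 := by nlinarith [norm_nonneg v]
  rw [gam, div_pow, Real.sq_sqrt this, one_pow, one_div]

theorem EuclideanSpace.dotProduct_ofLp_self {ι : Type*} [Fintype ι] (v : EuclideanSpace ℝ ι) :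
    v.ofLp ⬝ᵥ v.ofLp = ‖v‖ ^ 2 := by
  rw [← real_inner_self_eq_norm_sq, EuclideanSpace.inner_eq_star_dotProduct, star_trivial]

theorem mobius_det_general {n : ℕ} (v : EuclideanSpace ℝ (Fin n))
    (hv : ‖v‖ < 1) :
    (mobius v).det =
      ((1 - ‖v‖ ^ 2) / (((n : ℝ) + 1) - ((n : ℝ) - 3) * ‖v‖ ^ 2)) ^ (n + 1) := by
  have hγ := gam_sq hv
  set s := ‖v‖ ^ 2
  have hs0 : 0 ≤ s := by positivity
  have hs1 : 0 < 1 - s := by nlinarith [norm_nonneg v]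
  set b := 1 / (2 * gam v ^ 2)
  have hb : b = (1 - s) / 2 := by simp only [b, hγ]; field_simp
  have hab : (1 - b) + ((1 - b) - 1) * s / b = b := by
    rw [hb]; field_simp; ring
  have hcb : 2 * gam v ^ 2 / (((n : ℝ) - 3) + 4 * gam v ^ 2) * b
      = (1 - s) / (((n : ℝ) + 1) - ((n : ℝ) - 3) * s) := by
    simp only [b, hγ]
    field_simp
    congr 1
    ring
  rw [mobius, det_smul]
  -- the blocks of `mobius` are `replicateRow`, `replicateCol`, `vecMulVec` only after unfolding
  erw [det_fromBlocks_vecMulVec (a := 1 - b) (b := b) (by rw [hb]; linarith) (by rw [hb]; linarith)]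
  rw [EuclideanSpace.dotProduct_ofLp_self, hab, ← pow_succ, Fintype.card_sum, Fintype.card_unit,
    Fintype.card_fin, add_comm 1 n, ← mul_pow, hcb]

theorem mobius_det {n : ℕ} (hn : 3 ≤ n) (v : EuclideanSpace ℝ (Fin n))
    (hv : ‖v‖ < 1) :
    (mobius v).det =
      ((1 - ‖v‖ ^ 2) / (((n : ℝ) + 1) - ((n : ℝ) - 3) * ‖v‖ ^ 2)) ^ (n + 1) :=
  mobius_det_general v hv
end
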